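/- arXiv:1603.02592 — 2 statements merged into one kernel-verified Lean document; each statement's English description precedes it below -/
import Mathlib

section
/- Basis theorem for confluent normalizing linear rewriting: let R be a linear rewriting system on V whose rewriting-step relation is confluent and normalizing. Let M₀ = {m ∈ M | no rule of R has source m} be the set of monomials in normal form. Then the family (τ(m))_{m ∈ M₀} of images of the normal-form monomials is a basis of the quotient vector space V/W. -/
/-! Normal forms are exactly the elements of `N = supported K K M₀`, so it suffices to show
`V = N ⊕ W`. Every rewriting step changes an element by a multiple of a generator of `W`, so
normalization gives `V = N + W`. A step with the rule `p` applies a fixed linear map, so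
reductions of summands can be combined; together with uniqueness of normal forms (confluence)
this shows that every element of `W` rewrites to `0`, and a normal form that rewrites to `0`
is `0`, whence `N ∩ W = 0`. -/

/-- One rewriting step of the linear rewriting system `R` on the free `K`-vector space
`M →₀ K`. -/
def LinStep {K M : Type*} [Field K] (R : Set (M × (M →₀ K))) (a b : M →₀ K) : Prop :=
  ∃ r ∈ R, ∃ lam : K, lam ≠ 0 ∧ ∃ v : M →₀ K,
    r.1 ∉ v.support ∧ a = Finsupp.single r.1 lam + v ∧ b = lam • r.2 + v

/-- The subspace `W` of `V = M →₀ K` spanned by the vectors `m - w` for the rules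
`(m, w) ∈ R`; the quotient `V ⧸ W` is the hom-space of the presented linear category. -/
noncomputable def RelSpan {K M : Type*} [Field K] (R : Set (M × (M →₀ K))) : Submodule K (M →₀ K) :=
  Submodule.span K ((fun r : M × (M →₀ K) => Finsupp.single r.1 (1 : K) - r.2) '' R)

open Relation Finsupp

namespace Relation

variable {α : Type*} {r : α → α → Prop}

def IsNormalForm (r : α → α → Prop) (a : α) : Prop := ∀ b, ¬ r a b

def IsConfluent (r : α → α → Prop) : Prop :=
  ∀ a b c, ReflTransGen r a b → ReflTransGen r a c → Join (ReflTransGen r) b c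

def IsNormalizing (r : α → α → Prop) : Prop :=
  ∀ a, IsNormalForm r a ∨ ∃ b, TransGen r a b ∧ IsNormalForm r b

lemma IsNormalForm.eq_of_reflTransGen {n b : α} (hn : IsNormalForm r n)
    (h : ReflTransGen r n b) : b = n := by
  rcases h.cases_head with rfl | ⟨c, hc, -⟩
  · rfl
  · exact absurd hc (hn c)

lemma IsNormalizing.exists_reflTransGen (hr : IsNormalizing r) (a : α) :
    ∃ n, ReflTransGen r a n ∧ IsNormalForm r n := by
  rcases hr a with ha | ⟨n, han, hn⟩
  · exact ⟨a, .refl, ha⟩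
  · exact ⟨n, han.to_reflTransGen, hn⟩

lemma IsConfluent.reflTransGen_of_isNormalForm (hr : IsConfluent r) {a b n : α}
    (hn : IsNormalForm r n) (hab : ReflTransGen r a b) (han : ReflTransGen r a n) :
    ReflTransGen r b n := by
  obtain ⟨d, hbd, hnd⟩ := hr a b n hab han
  rwa [hn.eq_of_reflTransGen hnd] at hbd

end Relation

namespace LinearRewriting

variable {K M : Type*} [Field K] {R : Set (M × (M →₀ K))}

noncomputable def reduceAt (p : M × (M →₀ K)) : (M →₀ K) →ₗ[K] (M →₀ K) :=
  LinearMap.id + (lapply p.1).smulRight (p.2 - single p.1 1)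

lemma reduceAt_apply (p : M × (M →₀ K)) (a : M →₀ K) :
    reduceAt p a = a + a p.1 • (p.2 - single p.1 1) := rfl

lemma reduceAt_single_add (p : M × (M →₀ K)) (c : K) {v : M →₀ K} (hv : v p.1 = 0) :
    reduceAt p (single p.1 c + v) = c • p.2 + v := by
  rw [reduceAt_apply, Finsupp.add_apply, single_eq_same, hv, add_zero, smul_sub,
    smul_single_one]
  abel

lemma linStep_iff {a b : M →₀ K} :
    LinStep R a b ↔ ∃ p ∈ R, a p.1 ≠ 0 ∧ b = reduceAt p a := by
  constructor
  · rintro ⟨p, hp, c, hc, v, hv, rfl, rfl⟩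
    have hvp : v p.1 = 0 := notMem_support_iff.mp hv
    refine ⟨p, hp, by simpa [hvp] using hc, (reduceAt_single_add p c hvp).symm⟩
  · rintro ⟨p, hp, hne, rfl⟩
    refine ⟨p, hp, a p.1, hne, a.erase p.1, by simp, (single_add_erase p.1 a).symm, ?_⟩
    conv_lhs => rw [← single_add_erase p.1 a]
    exact reduceAt_single_add p _ erase_same

lemma reflTransGen_reduceAt {p : M × (M →₀ K)} (hp : p ∈ R) (a : M →₀ K) :
    ReflTransGen (LinStep R) a (reduceAt p a) := by
  by_cases ha : a p.1 = 0
  · rw [reduceAt_apply, ha, zero_smul, add_zero]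
  · exact .single (linStep_iff.2 ⟨p, hp, ha, rfl⟩)

lemma exists_reflTransGen_add {a c : M →₀ K} (h : ReflTransGen (LinStep R) a c)
    (b : M →₀ K) :
    ∃ d, ReflTransGen (LinStep R) (a + b) (c + d) ∧ ReflTransGen (LinStep R) b d := by
  induction h with
  | refl => exact ⟨b, .refl, .refl⟩
  | tail _ hstep ih =>
    obtain ⟨d, had, hbd⟩ := ih
    obtain ⟨p, hp, -, rfl⟩ := linStep_iff.1 hstep
    refine ⟨reduceAt p d, ?_, hbd.trans (reflTransGen_reduceAt hp d)⟩
    rw [← map_add]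
    exact had.trans (reflTransGen_reduceAt hp _)

lemma reflTransGen_smul {a b : M →₀ K} {c : K} (hc : c ≠ 0)
    (h : ReflTransGen (LinStep R) a b) : ReflTransGen (LinStep R) (c • a) (c • b) := by
  induction h with
  | refl => exact .refl
  | tail _ hstep ih =>
    obtain ⟨p, hp, hne, rfl⟩ := linStep_iff.1 hstep
    refine ih.tail (linStep_iff.2 ⟨p, hp, ?_, (map_smul _ c _).symm⟩)
    simpa using mul_ne_zero hc hne

lemma sub_mem_relSpan_of_reflTransGen {a b : M →₀ K} (h : ReflTransGen (LinStep R) a b) :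
    a - b ∈ RelSpan R := by
  induction h with
  | refl => simp
  | @tail b c _ hstep ih =>
    obtain ⟨p, hp, -, rfl⟩ := linStep_iff.1 hstep
    have hgen : b - reduceAt p b = b p.1 • (single p.1 1 - p.2) := by
      rw [reduceAt_apply, ← neg_sub (single p.1 1) p.2, smul_neg]
      abel
    rw [← sub_add_sub_cancel a b, hgen]
    exact add_mem ih (Submodule.smul_mem _ _ (Submodule.subset_span ⟨p, hp, rfl⟩))

def normalMonomials (R : Set (M × (M →₀ K))) : Set M := {m | ∀ w, (m, w) ∉ R}

lemma isNormalForm_iff_mem_supported {a : M →₀ K} :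
    IsNormalForm (LinStep R) a ↔ a ∈ supported K K (normalMonomials R) := by
  simp only [IsNormalForm, linStep_iff, mem_supported, Set.subset_def, Finset.mem_coe,
    mem_support_iff, normalMonomials, Set.mem_ofPred_eq]
  constructor
  · intro h m hm w hw
    exact h _ ⟨(m, w), hw, hm, rfl⟩
  · rintro h b ⟨p, hp, hne, -⟩
    exact h _ hne p.2 hp

lemma reflTransGen_add_of_isNormalForm (hconf : IsConfluent (LinStep R)) {a b x y : M →₀ K}
    (hx : IsNormalForm (LinStep R) x) (hy : IsNormalForm (LinStep R) y)
    (hax : ReflTransGen (LinStep R) a x) (hby : ReflTransGen (LinStep R) b y) :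
    ReflTransGen (LinStep R) (a + b) (x + y) := by
  obtain ⟨d, habd, hbd⟩ := exists_reflTransGen_add hax b
  obtain ⟨e, hdxe, hxe⟩ :=
    exists_reflTransGen_add (hconf.reflTransGen_of_isNormalForm hy hbd hby) x
  rw [hx.eq_of_reflTransGen hxe, add_comm y] at hdxe
  exact habd.trans (add_comm x d ▸ hdxe)

lemma reflTransGen_zero_of_mem_relSpan (hconf : IsConfluent (LinStep R))
    (hnorm : IsNormalizing (LinStep R)) {a : M →₀ K} (ha : a ∈ RelSpan R) :
    ReflTransGen (LinStep R) a 0 := by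
  have h0 : IsNormalForm (LinStep R) (0 : M →₀ K) :=
    isNormalForm_iff_mem_supported.2 (zero_mem _)
  induction ha using Submodule.span_induction with
  | mem _ hgen =>
    obtain ⟨p, hp, rfl⟩ := hgen
    obtain ⟨n, hwn, hn⟩ := hnorm.exists_reflTransGen p.2
    have hmn : ReflTransGen (LinStep R) (single p.1 1) n := by
      refine ReflTransGen.head (linStep_iff.2 ⟨p, hp, by simp, ?_⟩) hwn
      simpa using (reduceAt_single_add p 1 (v := 0) rfl).symm
    have hneg : ReflTransGen (LinStep R) (-p.2) (-n) := by
      simpa using reflTransGen_smul (c := -1) (by simp) hwn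
    have hn' : IsNormalForm (LinStep R) (-n) :=
      isNormalForm_iff_mem_supported.2 (neg_mem (isNormalForm_iff_mem_supported.1 hn))
    simpa [sub_eq_add_neg] using reflTransGen_add_of_isNormalForm hconf hn hn' hmn hneg
  | zero => exact .refl
  | add _ _ _ _ hx hy => simpa using reflTransGen_add_of_isNormalForm hconf h0 h0 hx hy
  | smul c _ _ hx =>
    rcases eq_or_ne c 0 with rfl | hc
    · rw [zero_smul]
    · simpa using reflTransGen_smul hc hx

lemma isCompl_supported_relSpan (hconf : IsConfluent (LinStep R))
    (hnorm : IsNormalizing (LinStep R)) :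
    IsCompl (supported K K (normalMonomials R)) (RelSpan R) := by
  constructor
  · refine Submodule.disjoint_def.2 fun a hN hW => ?_
    exact ((isNormalForm_iff_mem_supported.2 hN).eq_of_reflTransGen
      (reflTransGen_zero_of_mem_relSpan hconf hnorm hW)).symm
  · refine codisjoint_iff.2 (eq_top_iff.2 fun a _ => ?_)
    obtain ⟨n, han, hn⟩ := hnorm.exists_reflTransGen a
    exact Submodule.mem_sup.2 ⟨n, isNormalForm_iff_mem_supported.1 hn, a - n,
      sub_mem_relSpan_of_reflTransGen han, add_sub_cancel n a⟩

end LinearRewriting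

open LinearRewriting

/-- Basis theorem for confluent normalizing linear rewriting: if the rewriting-step
relation of `R` is confluent and normalizing, then the images under the quotient map
`τ : V → V ⧸ W` of the monomials in normal form (those which are the source of no rule)
form a basis of `V ⧸ W`: they are linearly independent and they span. -/
theorem basis_of_normal_forms {K M : Type*} [Field K] (R : Set (M × (M →₀ K)))
    (hconf : ∀ a b c : M →₀ K, Relation.ReflTransGen (LinStep R) a b →
      Relation.ReflTransGen (LinStep R) a c →
      ∃ d : M →₀ K, Relation.ReflTransGen (LinStep R) b d ∧
        Relation.ReflTransGen (LinStep R) c d)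
    (hnorm : ∀ a : M →₀ K, (∀ b : M →₀ K, ¬ LinStep R a b) ∨
      ∃ b : M →₀ K, Relation.TransGen (LinStep R) a b ∧ ∀ c : M →₀ K, ¬ LinStep R b c) :
    LinearIndependent K
      (fun m : {m : M // ∀ w : M →₀ K, (m, w) ∉ R} =>
        Submodule.Quotient.mk (p := RelSpan R) (Finsupp.single m.1 (1 : K))) ∧
    Submodule.span K
      (Set.range fun m : {m : M // ∀ w : M →₀ K, (m, w) ∉ R} =>
        Submodule.Quotient.mk (p := RelSpan R) (Finsupp.single m.1 (1 : K))) = ⊤ := by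
  let v : normalMonomials R → M →₀ K := fun m => single m.1 1
  have hcompl := isCompl_supported_relSpan hconf hnorm
  have hspan : Submodule.span K (Set.range v) = supported K K (normalMonomials R) := by
    rw [supported_eq_span_single, Set.image_eq_range]
  constructor
  · have hv : LinearIndependent K v :=
      (linearIndependent_single_one K M).comp _ Subtype.val_injective
    refine hv.map (f := (RelSpan R).mkQ) ?_
    rw [hspan, Submodule.ker_mkQ]
    exact hcompl.disjoint
  · change Submodule.span K (Set.range ((RelSpan R).mkQ ∘ v)) = ⊤
    rw [Set.range_comp, Submodule.span_image, hspan, Submodule.map_mkQ_eq_top]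
    exact hcompl.symm.sup_eq_top
end

section
/- Concatenation formula for the word measure: for all words σ₁, σ₂ over P, |σ₁σ₂| = |σ₁| + |σ₂|^{(σ₁)}, where σ₁σ₂ denotes the concatenation of σ₁ and σ₂. -/
/-- The measure of a word over `P` with respect to a strict order `lt` on `P`,
valued in finitely supported multisets `P →₀ ℕ`: `|ε| = 0` and
`|I σ| = δ_I + |σ^(I)|`, where `σ^(I)` is `σ` with every letter `lt`-below `I`
removed. -/
noncomputable def wordMeas {P : Type*} (lt : P → P → Prop) : List P → (P →₀ ℕ)
  | [] => 0
  | I :: σ =>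
      Finsupp.single I 1 +
        wordMeas lt (σ.filter fun J => @decide (¬ lt J I) (Classical.propDecidable _))
termination_by l => l.length
decreasing_by
  simp only [List.length_cons]
  refine Nat.lt_succ_of_le ?_
  first
  | exact List.length_filter_le _ _
  | (simp only [List.length_unattach]; exact (List.length_filter_le _ _).trans (le_of_eq List.length_attach))
  | simpa using List.length_filter_le _ σ.attach
  | (simp only [List.length_unattach]; exact (List.length_filter_le _ _).trans (by simp))

open Classical in
/-- The restriction `ν^(σ)` of a multiset `ν : P →₀ ℕ` along a word `σ`:
`ν^(σ)(K) = 0` if `K` is `lt`-below some letter occurring in `|σ|`, and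
`ν^(σ)(K) = ν K` otherwise. -/
noncomputable def measRestr {P : Type*} (lt : P → P → Prop) (σ : List P)
    (ν : P →₀ ℕ) : P →₀ ℕ :=
  Finsupp.filter (fun K => ¬ ∃ I : P, wordMeas lt σ I ≠ 0 ∧ lt K I) ν

/-!
Unfolding `|I σ₁ σ₂| = δ_I + |σ₁^(I) σ₂^(I)|` allows induction on the length of `σ₁`, using two
consequences of transitivity. First, `|σ^(I)|` is `|σ|` with the letters below `I` erased.
Second, every letter of `σ` lies below or at a letter in the support of `|σ|`, so `ν^(σ)` depends
only on the letters of `σ`; and `K` lies below a letter of `I σ` iff `K ≺ I` or `K` lies below a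
letter of `σ^(I)`.
-/

/-- The word `σ^(I)`. -/
noncomputable def dropBelow {P : Type*} (lt : P → P → Prop) (I : P) (σ : List P) : List P :=
  σ.filter fun J => @decide (¬ lt J I) (Classical.propDecidable _)

section

variable {P : Type*} (lt : P → P → Prop)

namespace dropBelow

variable {lt}

@[simp]
theorem mem_iff {I J : P} {σ : List P} : J ∈ dropBelow lt I σ ↔ J ∈ σ ∧ ¬ lt J I := by
  simp [dropBelow]

theorem length_lt_length_cons (I J : P) (σ : List P) :
    (dropBelow lt I σ).length < (J :: σ).length :=
  Nat.lt_succ_of_le (List.length_filter_le _ _)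

theorem append (I : P) (σ₁ σ₂ : List P) :
    dropBelow lt I (σ₁ ++ σ₂) = dropBelow lt I σ₁ ++ dropBelow lt I σ₂ :=
  List.filter_append ..

theorem comm (I J : P) (σ : List P) :
    dropBelow lt I (dropBelow lt J σ) = dropBelow lt J (dropBelow lt I σ) :=
  List.filter_comm ..

theorem cons_of_lt {I J : P} (σ : List P) (h : lt J I) :
    dropBelow lt I (J :: σ) = dropBelow lt I σ := by
  simp [dropBelow, h]

theorem cons_of_not_lt {I J : P} (σ : List P) (h : ¬ lt J I) :
    dropBelow lt I (J :: σ) = J :: dropBelow lt I σ := by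
  simp [dropBelow, h]

end dropBelow

theorem wordMeas_nil : wordMeas lt ([] : List P) = 0 := by
  rw [wordMeas]

theorem wordMeas_cons (I : P) (σ : List P) :
    wordMeas lt (I :: σ) = Finsupp.single I 1 + wordMeas lt (dropBelow lt I σ) := by
  rw [wordMeas, dropBelow]

theorem wordMeas_cons_apply_ne_zero_of_apply_ne_zero {I K : P} {σ : List P}
    (h : wordMeas lt (dropBelow lt I σ) K ≠ 0) : wordMeas lt (I :: σ) K ≠ 0 := by
  rw [wordMeas_cons, Finsupp.add_apply]
  omega

theorem wordMeas_cons_apply_self_ne_zero (I : P) (σ : List P) : wordMeas lt (I :: σ) I ≠ 0 := by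
  simp [wordMeas_cons]

theorem mem_of_wordMeas_apply_ne_zero : ∀ {σ : List P} {K : P}, wordMeas lt σ K ≠ 0 → K ∈ σ
  | [], K, h => by simp [wordMeas_nil] at h
  | I :: σ, K, h => by
    rcases eq_or_ne K I with rfl | hKI
    · exact List.mem_cons_self
    · rw [wordMeas_cons, Finsupp.add_apply, Finsupp.single_eq_of_ne hKI, zero_add] at h
      exact List.mem_cons_of_mem _ (dropBelow.mem_iff.mp (mem_of_wordMeas_apply_ne_zero h)).1
termination_by σ => σ.length
decreasing_by exact dropBelow.length_lt_length_cons _ _ _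

theorem measRestr_nil (ν : P →₀ ℕ) : measRestr lt [] ν = ν := by
  ext K
  simp [measRestr, wordMeas_nil]

variable {lt} [IsTrans P lt]

theorem exists_wordMeas_apply_ne_zero_of_lt_of_mem {K : P} :
    ∀ {σ : List P} {J : P}, J ∈ σ → lt K J → ∃ I, wordMeas lt σ I ≠ 0 ∧ lt K I
  | I :: σ, J, hJ, hKJ => by
    rcases List.mem_cons.mp hJ with rfl | hJσ
    · exact ⟨J, wordMeas_cons_apply_self_ne_zero lt J σ, hKJ⟩
    by_cases hJI : lt J I
    · exact ⟨I, wordMeas_cons_apply_self_ne_zero lt I σ, trans_of lt hKJ hJI⟩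
    · obtain ⟨I', hI', hKI'⟩ :=
        exists_wordMeas_apply_ne_zero_of_lt_of_mem (dropBelow.mem_iff.mpr ⟨hJσ, hJI⟩) hKJ
      exact ⟨I', wordMeas_cons_apply_ne_zero_of_apply_ne_zero lt hI', hKI'⟩
termination_by σ => σ.length
decreasing_by exact dropBelow.length_lt_length_cons _ _ _

theorem exists_wordMeas_apply_ne_zero_lt_iff (σ : List P) (K : P) :
    (∃ I, wordMeas lt σ I ≠ 0 ∧ lt K I) ↔ ∃ J ∈ σ, lt K J :=
  ⟨fun ⟨I, hI, hKI⟩ => ⟨I, mem_of_wordMeas_apply_ne_zero lt hI, hKI⟩,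
    fun ⟨_, hJ, hKJ⟩ => exists_wordMeas_apply_ne_zero_of_lt_of_mem hJ hKJ⟩

open Classical in
theorem measRestr_eq_filter (σ : List P) (ν : P →₀ ℕ) :
    measRestr lt σ ν = ν.filter fun K => ¬ ∃ J ∈ σ, lt K J := by
  simp only [measRestr, exists_wordMeas_apply_ne_zero_lt_iff]

theorem exists_mem_cons_lt_iff (I K : P) (σ : List P) :
    (∃ J ∈ I :: σ, lt K J) ↔ lt K I ∨ ∃ J ∈ dropBelow lt I σ, lt K J := by
  constructor
  · rintro ⟨J, hJ, hKJ⟩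
    rcases List.mem_cons.mp hJ with rfl | hJσ
    · exact Or.inl hKJ
    by_cases hJI : lt J I
    · exact Or.inl (trans_of lt hKJ hJI)
    · exact Or.inr ⟨J, dropBelow.mem_iff.mpr ⟨hJσ, hJI⟩, hKJ⟩
  · rintro (hKI | ⟨J, hJ, hKJ⟩)
    · exact ⟨I, List.mem_cons_self, hKI⟩
    · exact ⟨J, List.mem_cons_of_mem _ (dropBelow.mem_iff.mp hJ).1, hKJ⟩

open Classical in
theorem measRestr_cons (I : P) (σ : List P) (ν : P →₀ ℕ) :
    measRestr lt (I :: σ) ν = measRestr lt (dropBelow lt I σ) (ν.filter fun K => ¬ lt K I) := by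
  ext K
  simp only [measRestr_eq_filter, Finsupp.filter_apply, exists_mem_cons_lt_iff]
  by_cases hKI : lt K I <;> simp [hKI]

open Classical in
theorem wordMeas_dropBelow : ∀ (I : P) (σ : List P),
    wordMeas lt (dropBelow lt I σ) = (wordMeas lt σ).filter fun K => ¬ lt K I
  | I, [] => by simp [dropBelow, wordMeas_nil, Finsupp.filter_zero]
  | I, J :: σ => by
    by_cases hJI : lt J I
    · rw [dropBelow.cons_of_lt σ hJI, wordMeas_dropBelow I σ, wordMeas_cons, Finsupp.filter_add,
        Finsupp.filter_single_of_neg (fun K => ¬ lt K I) (not_not_intro hJI), zero_add,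
        wordMeas_dropBelow J σ]
      ext K
      by_cases hKI : lt K I
      · simp [hKI]
      · have hKJ : ¬ lt K J := fun hKJ => hKI (trans_of lt hKJ hJI)
        simp [hKI, hKJ]
    · rw [dropBelow.cons_of_not_lt σ hJI, wordMeas_cons, wordMeas_cons, dropBelow.comm,
        wordMeas_dropBelow I (dropBelow lt J σ), Finsupp.filter_add,
        Finsupp.filter_single_of_pos (fun K => ¬ lt K I) hJI]
termination_by _ σ => σ.length
decreasing_by all_goals first | exact dropBelow.length_lt_length_cons .. | simp

end

/-- Concatenation formula for the word measure: `|σ₁σ₂| = |σ₁| + |σ₂|^(σ₁)`. -/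
theorem wordMeas_append {P : Type*} (lt : P → P → Prop)
    (htrans : ∀ p q r : P, lt p q → lt q r → lt p r)
    (σ₁ σ₂ : List P) :
    wordMeas lt (σ₁ ++ σ₂) = wordMeas lt σ₁ + measRestr lt σ₁ (wordMeas lt σ₂) := by
  have : IsTrans P lt := ⟨htrans⟩
  match σ₁ with
  | [] =>
    rw [List.nil_append, wordMeas_nil, zero_add, measRestr_nil]
  | I :: σ =>
    rw [List.cons_append, wordMeas_cons, dropBelow.append,
      wordMeas_append lt htrans (dropBelow lt I σ), wordMeas_dropBelow I σ₂,
      ← measRestr_cons, wordMeas_cons, add_assoc]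
termination_by σ₁.length
decreasing_by exact dropBelow.length_lt_length_cons ..
end
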